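/- arXiv:1502.05895 — 4 statements merged into one kernel-verified Lean document; each statement's English description precedes it below -/
import Mathlib

section
/- Let p > 7 be a prime and suppose the Gaussian Mersenne norm G_p is prime and G_p = x^2 + 7y^2 for integers x, y. Then x ≡ ±1 (mod 8) and 4 divides y. -/
lemma gm_pow_two_eq_zero {n : ℕ} (hn : 5 ≤ n) : (2 : ZMod 32) ^ n = 0 := by
  obtain ⟨k, rfl⟩ := Nat.exists_eq_add_of_le hn
  have h : (2 : ZMod 32) ^ 5 = 0 := by decide
  rw [pow_add, h, zero_mul]

lemma gm_aux : ∀ a b : ZMod 32, a ^ 2 + 7 * b ^ 2 = 1 →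
    ((ZMod.castHom (by norm_num : (8 : ℕ) ∣ 32) (ZMod 8) a = 1 ∨
      ZMod.castHom (by norm_num : (8 : ℕ) ∣ 32) (ZMod 8) a = -1) ∧
      ZMod.castHom (by norm_num : (4 : ℕ) ∣ 32) (ZMod 4) b = 0) := by decide

/-- If `p > 7` is prime, the Gaussian Mersenne norm `G_p` is prime, and
`G_p = x^2 + 7 y^2`, then `x ≡ ±1 (mod 8)` and `4 ∣ y`. -/
theorem gaussianMersennePrime_rep (p : ℕ) [Fact p.Prime] (hp : 7 < p) (x y : ℤ)
    (hGp : Prime ((2 : ℤ) ^ p - legendreSym p 2 * 2 ^ ((p + 1) / 2) + 1))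
    (hrep : (2 : ℤ) ^ p - legendreSym p 2 * 2 ^ ((p + 1) / 2) + 1 = x ^ 2 + 7 * y ^ 2) :
    (x ≡ 1 [ZMOD 8] ∨ x ≡ -1 [ZMOD 8]) ∧ 4 ∣ y := by
  have hodd : Odd p := (Fact.out : p.Prime).odd_of_ne_two (by omega)
  obtain ⟨k, hk⟩ := hodd
  have h1 : 5 ≤ p := by omega
  have h2 : 5 ≤ (p + 1) / 2 := by omega
  have h32 : ((x : ZMod 32)) ^ 2 + 7 * (y : ZMod 32) ^ 2 = 1 := by
    have := congrArg (fun z : ℤ => (z : ZMod 32)) hrep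
    push_cast at this
    rw [gm_pow_two_eq_zero h1, gm_pow_two_eq_zero h2] at this
    rw [← this]; ring
  have := gm_aux (x : ZMod 32) (y : ZMod 32) h32
  simp only [map_intCast] at this
  obtain ⟨h8, h4⟩ := this
  constructor
  · rcases h8 with h | h
    · left
      exact (ZMod.intCast_eq_intCast_iff x 1 8).mp (by push_cast; exact h)
    · right
      exact (ZMod.intCast_eq_intCast_iff x (-1) 8).mp (by push_cast; exact h)
  · have := (ZMod.intCast_zmod_eq_zero_iff_dvd y 4).mp h4
    exact_mod_cast this
end

section
/- For any prime p, the norm of the Gaussian integer (1+i)^p - 1 equals 2^p - (2/p)·2^((p+1)/2) + 1, where (2/p) is the Legendre symbol. -/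
lemma gm_aux_norm (z : GaussianInt) : (z - 1).norm = z.norm - 2 * z.re + 1 := by
  simp [Zsqrtd.norm, Zsqrtd.re_sub, Zsqrtd.im_sub]; ring

lemma gm_pow8 : (⟨1, 1⟩ : GaussianInt) ^ 8 = 16 := by decide

lemma gm_re3 : ((⟨1, 1⟩ : GaussianInt) ^ 3).re = -2 := by decide
lemma gm_re5 : ((⟨1, 1⟩ : GaussianInt) ^ 5).re = -4 := by decide
lemma gm_re7 : ((⟨1, 1⟩ : GaussianInt) ^ 7).re = 8 := by decide

lemma gm_re_pow (k r : ℕ) :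
    ((⟨1, 1⟩ : GaussianInt) ^ (8 * k + r)).re = 16 ^ k * ((⟨1, 1⟩ : GaussianInt) ^ r).re := by
  rw [pow_add, pow_mul, gm_pow8]
  have : ((16 : GaussianInt)) ^ k = ((16 ^ k : ℤ) : GaussianInt) := by push_cast; ring
  rw [this, Zsqrtd.re_mul, Zsqrtd.re_intCast, Zsqrtd.im_intCast]
  ring

/-- For any prime `p`, the norm of the Gaussian integer `(1 + i)^p - 1` equals
`2^p - (2/p) * 2^((p+1)/2) + 1`. -/
theorem norm_gaussianMersenne (p : ℕ) [Fact p.Prime] :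
    Zsqrtd.norm ((⟨1, 1⟩ : GaussianInt) ^ p - 1) =
      2 ^ p - legendreSym p 2 * 2 ^ ((p + 1) / 2) + 1 := by
  rcases eq_or_ne p 2 with hp2 | hp2
  · subst hp2
    have h0 : legendreSym 2 2 = 0 := by
      rw [legendreSym.eq_zero_iff]
      exact_mod_cast ZMod.natCast_self 2
    rw [h0]
    norm_num
    decide
  · have hodd : p % 2 = 1 := Nat.odd_iff.mp ((Fact.out : p.Prime).odd_of_ne_two hp2)
    rw [gm_aux_norm]
    have hnp : ((⟨1,1⟩ : GaussianInt) ^ p).norm = 2 ^ p := by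
      have h := map_pow Zsqrtd.normMonoidHom (⟨1,1⟩ : GaussianInt) p
      have h1 : Zsqrtd.normMonoidHom (⟨1,1⟩ : GaussianInt) = 2 := by decide
      rw [h1] at h
      exact h
    rw [hnp, legendreSym.at_two hp2, ZMod.χ₈_nat_eq_if_mod_eight]
    have h8 : p % 8 = 1 ∨ p % 8 = 3 ∨ p % 8 = 5 ∨ p % 8 = 7 := by omega
    rcases h8 with h | h | h | h
    · obtain ⟨k, rfl⟩ : ∃ k, p = 8 * k + 1 := ⟨p / 8, by omega⟩
      have h2 : (8 * k + 1 + 1) / 2 = 4 * k + 1 := by omega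
      rw [gm_re_pow, h2]
      simp only [hodd, h]
      norm_num [pow_add, pow_mul]
      ring
    · obtain ⟨k, rfl⟩ : ∃ k, p = 8 * k + 3 := ⟨p / 8, by omega⟩
      have h2 : (8 * k + 3 + 1) / 2 = 4 * k + 2 := by omega
      rw [gm_re_pow, h2, gm_re3]
      simp only [hodd, h]
      norm_num [pow_add, pow_mul]
      ring
    · obtain ⟨k, rfl⟩ : ∃ k, p = 8 * k + 5 := ⟨p / 8, by omega⟩
      have h2 : (8 * k + 5 + 1) / 2 = 4 * k + 3 := by omega
      rw [gm_re_pow, h2, gm_re5]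
      simp only [hodd, h]
      norm_num [pow_add, pow_mul]
      ring
    · obtain ⟨k, rfl⟩ : ∃ k, p = 8 * k + 7 := ⟨p / 8, by omega⟩
      have h2 : (8 * k + 7 + 1) / 2 = 4 * k + 4 := by omega
      rw [gm_re_pow, h2, gm_re7]
      simp only [hodd, h]
      norm_num [pow_add, pow_mul]
      ring
end

section
/- For any prime p ≠ 3, the norm of the Eisenstein integer (1-ω)^p - 1, where ω is a primitive cube root of unity, equals 3^p - (3/p)·3^((p+1)/2) + 1, where (3/p) is the Legendre symbol. -/
/-- For any prime `p ≠ 3`, the norm (squared complex absolute value) of the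
Eisenstein integer `(1 - ω)^p - 1`, where `ω` is a primitive cube root of unity,
equals `3^p - (3/p) * 3^((p+1)/2) + 1`. -/
theorem norm_eisensteinMersenne (p : ℕ) [Fact p.Prime] (hp : p ≠ 3) (ω : ℂ)
    (hω : IsPrimitiveRoot ω 3) :
    Complex.normSq ((1 - ω) ^ p - 1) =
      ((3 ^ p - legendreSym p 3 * 3 ^ ((p + 1) / 2) + 1 : ℤ) : ℝ) := by
  have hpp : p.Prime := Fact.out
  have hω3 : ω ^ 3 = 1 := hω.pow_eq_one
  have hω1 : ω ≠ 1 := hω.ne_one (by norm_num)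
  have hω0 : ω ≠ 0 := hω.ne_zero (by norm_num)
  have hsum : ω ^ 2 + ω + 1 = 0 := by
    have h : (ω - 1) * (ω ^ 2 + ω + 1) = 0 := by linear_combination hω3
    rcases mul_eq_zero.mp h with h | h
    · exact absurd (sub_eq_zero.mp h) hω1
    · exact h
  have hns : Complex.normSq ω = 1 := by
    have h3 : Complex.normSq ω ^ 3 = 1 := by
      rw [← map_pow, hω3, map_one]
    nlinarith [Complex.normSq_nonneg ω, sq_nonneg (Complex.normSq ω - 1),
      sq_nonneg (Complex.normSq ω + 1)]
  have hconj : (starRingEnd ℂ) ω = ω ^ 2 := by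
    have h : ω * (starRingEnd ℂ) ω = ω * ω ^ 2 := by
      rw [Complex.mul_conj, hns]; push_cast; linear_combination -hω3
    exact mul_left_cancel₀ hω0 h
  suffices h : ((1 - ω) ^ p - 1) * ((1 - ω ^ 2) ^ p - 1)
      = ((3 ^ p - legendreSym p 3 * 3 ^ ((p + 1) / 2) + 1 : ℤ) : ℂ) by
    have hc : ((Complex.normSq ((1 - ω) ^ p - 1) : ℝ) : ℂ)
        = ((3 ^ p - legendreSym p 3 * 3 ^ ((p + 1) / 2) + 1 : ℤ) : ℂ) := by
      rw [← Complex.mul_conj, map_sub, map_pow, map_sub, map_one, hconj]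
      exact h
    exact_mod_cast hc
  rcases eq_or_ne p 2 with rfl | hp2
  · have hε : legendreSym 2 3 = 1 := by
      have h : @legendreSym 2 ⟨Nat.prime_two⟩ 3 = 1 := by decide
      exact h
    rw [hε]
    push_cast
    linear_combination ((-7 : ℂ) + 7 * ω - 3 * ω ^ 3 + ω ^ 4) * hsum
  · have hodd : Odd p := hpp.odd_of_ne_two hp2
    have h3 : ¬ (3 ∣ p) := fun h =>
      hp ((Nat.prime_dvd_prime_iff_eq (by norm_num) hpp).mp h).symm
    have hm2 : p % 2 = 1 := Nat.odd_iff.mp hodd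
    have hm3 : p % 3 ≠ 0 := fun h => h3 (Nat.dvd_of_mod_eq_zero h)
    have hε0 : legendreSym p 3 = jacobiSym 3 (p % 12) := by
      rw [jacobiSym.legendreSym.to_jacobiSym, jacobiSym.mod_right 3 hodd]
      norm_num
    have hAB : (1 - ω) * (1 - ω ^ 2) = 3 := by linear_combination hω3 - hsum
    have hA2 : (1 - ω) ^ 2 = -3 * ω := by linear_combination hsum
    have hB2 : (1 - ω ^ 2) ^ 2 = -3 * ω ^ 2 := by linear_combination hsum + ω * hω3
    have hA12 : (1 - ω) ^ 12 = 729 := by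
      rw [show (12 : ℕ) = 2 * 6 from rfl, pow_mul, hA2]
      linear_combination ((-729 : ℂ) + 729 * ω - 729 * ω ^ 3 + 729 * ω ^ 4) * hsum
    have hB12 : (1 - ω ^ 2) ^ 12 = 729 := by
      rw [show (12 : ℕ) = 2 * 6 from rfl, pow_mul, hB2]
      linear_combination ((-729 : ℂ) + 729 * ω - 729 * ω ^ 3 + 729 * ω ^ 4
        - 729 * ω ^ 6 + 729 * ω ^ 7 - 729 * ω ^ 9 + 729 * ω ^ 10) * hsum
    have hr : p % 12 = 1 ∨ p % 12 = 5 ∨ p % 12 = 7 ∨ p % 12 = 11 := by omega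
    rcases hr with hcase | hcase | hcase | hcase
    · -- p % 12 = 1
      obtain ⟨k, rfl⟩ : ∃ k, p = 12 * k + 1 := ⟨p / 12, by omega⟩
      have hε : legendreSym (12 * k + 1) 3 = 1 := by
        rw [hε0, hcase]; exact jacobiSym.one_right 3
      have hS : (1 - ω) ^ 1 + (1 - ω ^ 2) ^ 1 = 3 := by
        linear_combination (-1 : ℂ) * hsum
      have hC : (1 - ω) ^ 1 * (1 - ω ^ 2) ^ 1 = 3 ^ 1 := by
        rw [← mul_pow, hAB]
      have he : (12 * k + 1 + 1) / 2 = 6 * k + 1 := by omega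
      have hA : (1 - ω) ^ (12 * k + 1) = 729 ^ k * (1 - ω) ^ 1 := by
        rw [pow_add, pow_mul, hA12]
      have hB : (1 - ω ^ 2) ^ (12 * k + 1) = 729 ^ k * (1 - ω ^ 2) ^ 1 := by
        rw [pow_add, pow_mul, hB12]
      have e6 : (3 : ℂ) ^ (6 * k) = 729 ^ k := by rw [pow_mul]; norm_num
      have e1 : (3 : ℂ) ^ (12 * k + 1) = 729 ^ k * 729 ^ k * 3 ^ 1 := by
        rw [pow_add, show 12 * k = 6 * k + 6 * k from by ring, pow_add, e6]
      have e2 : (3 : ℂ) ^ (6 * k + 1) = 729 ^ k * 3 ^ 1 := by rw [pow_add, e6]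
      rw [hε, he, hA, hB]
      push_cast
      rw [e1, e2]
      linear_combination (729 ^ k * 729 ^ k : ℂ) * hC - (729 ^ k : ℂ) * hS
    · -- p % 12 = 5
      obtain ⟨k, rfl⟩ : ∃ k, p = 12 * k + 5 := ⟨p / 12, by omega⟩
      have hε : legendreSym (12 * k + 5) 3 = -1 := by
        rw [hε0, hcase, ← @jacobiSym.legendreSym.to_jacobiSym 5 ⟨by norm_num⟩]
        decide
      have hS : (1 - ω) ^ 5 + (1 - ω ^ 2) ^ 5 = -27 := by
        linear_combination ((29 : ℂ) - 34 * ω + 10 * ω ^ 2 + 14 * ω ^ 3 - 9 * ω ^ 4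
          - 6 * ω ^ 5 + 5 * ω ^ 6 + ω ^ 7 - ω ^ 8) * hsum
      have hC : (1 - ω) ^ 5 * (1 - ω ^ 2) ^ 5 = 3 ^ 5 := by
        rw [← mul_pow, hAB]
      have he : (12 * k + 5 + 1) / 2 = 6 * k + 3 := by omega
      have hA : (1 - ω) ^ (12 * k + 5) = 729 ^ k * (1 - ω) ^ 5 := by
        rw [pow_add, pow_mul, hA12]
      have hB : (1 - ω ^ 2) ^ (12 * k + 5) = 729 ^ k * (1 - ω ^ 2) ^ 5 := by
        rw [pow_add, pow_mul, hB12]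
      have e6 : (3 : ℂ) ^ (6 * k) = 729 ^ k := by rw [pow_mul]; norm_num
      have e1 : (3 : ℂ) ^ (12 * k + 5) = 729 ^ k * 729 ^ k * 3 ^ 5 := by
        rw [pow_add, show 12 * k = 6 * k + 6 * k from by ring, pow_add, e6]
      have e2 : (3 : ℂ) ^ (6 * k + 3) = 729 ^ k * 3 ^ 3 := by rw [pow_add, e6]
      rw [hε, he, hA, hB]
      push_cast
      rw [e1, e2]
      linear_combination (729 ^ k * 729 ^ k : ℂ) * hC - (729 ^ k : ℂ) * hS
    · -- p % 12 = 7
      obtain ⟨k, rfl⟩ : ∃ k, p = 12 * k + 7 := ⟨p / 12, by omega⟩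
      have hε : legendreSym (12 * k + 7) 3 = -1 := by
        rw [hε0, hcase, ← @jacobiSym.legendreSym.to_jacobiSym 7 ⟨by norm_num⟩]
        decide
      have hS : (1 - ω) ^ 7 + (1 - ω ^ 2) ^ 7 = -81 := by
        linear_combination ((83 : ℂ) - 90 * ω + 21 * ω ^ 2 + 34 * ω ^ 3 + ω ^ 4
          - 56 * ω ^ 5 + 27 * ω ^ 6 + 28 * ω ^ 7 - 20 * ω ^ 8 - 8 * ω ^ 9
          + 7 * ω ^ 10 + ω ^ 11 - ω ^ 12) * hsum
      have hC : (1 - ω) ^ 7 * (1 - ω ^ 2) ^ 7 = 3 ^ 7 := by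
        rw [← mul_pow, hAB]
      have he : (12 * k + 7 + 1) / 2 = 6 * k + 4 := by omega
      have hA : (1 - ω) ^ (12 * k + 7) = 729 ^ k * (1 - ω) ^ 7 := by
        rw [pow_add, pow_mul, hA12]
      have hB : (1 - ω ^ 2) ^ (12 * k + 7) = 729 ^ k * (1 - ω ^ 2) ^ 7 := by
        rw [pow_add, pow_mul, hB12]
      have e6 : (3 : ℂ) ^ (6 * k) = 729 ^ k := by rw [pow_mul]; norm_num
      have e1 : (3 : ℂ) ^ (12 * k + 7) = 729 ^ k * 729 ^ k * 3 ^ 7 := by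
        rw [pow_add, show 12 * k = 6 * k + 6 * k from by ring, pow_add, e6]
      have e2 : (3 : ℂ) ^ (6 * k + 4) = 729 ^ k * 3 ^ 4 := by rw [pow_add, e6]
      rw [hε, he, hA, hB]
      push_cast
      rw [e1, e2]
      linear_combination (729 ^ k * 729 ^ k : ℂ) * hC - (729 ^ k : ℂ) * hS
    · -- p % 12 = 11
      obtain ⟨k, rfl⟩ : ∃ k, p = 12 * k + 11 := ⟨p / 12, by omega⟩
      have hε : legendreSym (12 * k + 11) 3 = 1 := by
        rw [hε0, hcase, ← @jacobiSym.legendreSym.to_jacobiSym 11 ⟨by norm_num⟩]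
        decide
      have hS : (1 - ω) ^ 11 + (1 - ω ^ 2) ^ 11 = 729 := by
        linear_combination ((-727 : ℂ) + 716 * ω + 55 * ω ^ 2 - 936 * ω ^ 3
          + 1266 * ω ^ 4 - 792 * ω ^ 5 - 177 * ω ^ 6 + 639 * ω ^ 7 + 33 * ω ^ 8
          - 727 * ω ^ 9 + 243 * ω ^ 10 + 483 * ω ^ 11 - 264 * ω ^ 12 - 219 * ω ^ 13
          + 153 * ω ^ 14 + 66 * ω ^ 15 - 54 * ω ^ 16 - 12 * ω ^ 17 + 11 * ω ^ 18
          + ω ^ 19 - ω ^ 20) * hsum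
      have hC : (1 - ω) ^ 11 * (1 - ω ^ 2) ^ 11 = 3 ^ 11 := by
        rw [← mul_pow, hAB]
      have he : (12 * k + 11 + 1) / 2 = 6 * k + 6 := by omega
      have hA : (1 - ω) ^ (12 * k + 11) = 729 ^ k * (1 - ω) ^ 11 := by
        rw [pow_add, pow_mul, hA12]
      have hB : (1 - ω ^ 2) ^ (12 * k + 11) = 729 ^ k * (1 - ω ^ 2) ^ 11 := by
        rw [pow_add, pow_mul, hB12]
      have e6 : (3 : ℂ) ^ (6 * k) = 729 ^ k := by rw [pow_mul]; norm_num
      have e1 : (3 : ℂ) ^ (12 * k + 11) = 729 ^ k * 729 ^ k * 3 ^ 11 := by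
        rw [pow_add, show 12 * k = 6 * k + 6 * k from by ring, pow_add, e6]
      have e2 : (3 : ℂ) ^ (6 * k + 6) = 729 ^ k * 3 ^ 6 := by rw [pow_add, e6]
      rw [hε, he, hA, hB]
      push_cast
      rw [e1, e2]
      linear_combination (729 ^ k * 729 ^ k : ℂ) * hC - (729 ^ k : ℂ) * hS
end

section
/- The group of units of O_K/Δ, where K = Q(√-7), Δ = 𝔭^3 and 𝔭 = (2, ω) is a prime ideal above 2 with ω = (1+√-7)/2, is isomorphic to (Z/8Z)^×. -/
open IntermediateField NumberField Polynomial

local notation "α" => (Complex.I * Real.sqrt 7 : ℂ)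

lemma sqrt7_sq : ((Real.sqrt 7 : ℝ) : ℂ) ^ 2 = 7 := by
  rw [← Complex.ofReal_pow, Real.sq_sqrt (by norm_num : (7:ℝ) ≥ 0)]
  norm_num

lemma alpha_sq : α ^ 2 = -7 := by
  rw [mul_pow, Complex.I_sq, sqrt7_sq]; ring

lemma alpha_int : IsIntegral ℚ α := by
  refine ⟨X ^ 2 + C 7, monic_X_pow_add_C 7 (by norm_num), ?_⟩
  simp [eval₂_add, alpha_sq]

lemma alpha_min : minpoly ℚ α = X ^ 2 + C 7 := by
  have hmon : (X ^ 2 + C 7 : ℚ[X]).Monic := monic_X_pow_add_C 7 (by norm_num)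
  have hdeg : (X ^ 2 + C 7 : ℚ[X]).natDegree = 2 := by
    exact natDegree_X_pow_add_C
  have hirr : Irreducible (X ^ 2 + C 7 : ℚ[X]) := by
    rw [hmon.irreducible_iff_roots_eq_zero_of_degree_le_three (by omega) (by omega)]
    refine Multiset.eq_zero_of_forall_notMem fun r hr => ?_
    rw [mem_roots hmon.ne_zero] at hr
    have := hr
    simp only [IsRoot, eval_add, eval_pow, eval_X, eval_C] at this
    nlinarith [sq_nonneg r]
  refine (minpoly.eq_of_irreducible_of_monic hirr ?_ hmon).symm
  simp [map_ofNat, alpha_sq]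

local notation "K" => ℚ⟮(Complex.I * Real.sqrt 7 : ℂ)⟯

instance KNumberField : NumberField K where
  to_charZero := inferInstance
  to_finiteDimensional := IntermediateField.adjoin.finiteDimensional alpha_int

lemma finrank_K : Module.finrank ℚ K = 2 := by
  rw [IntermediateField.adjoin.finrank alpha_int, alpha_min]
  exact natDegree_X_pow_add_C

local notation "g" => AdjoinSimple.gen ℚ (Complex.I * Real.sqrt 7 : ℂ)

lemma coe_gen : ((g : K) : ℂ) = α := rfl

lemma gen_sq : (g : K) ^ 2 = -7 := by
  apply Subtype.coe_injective
  push_cast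
  exact alpha_sq

noncomputable def sigma : K →ₐ[ℚ] K :=
  (IntermediateField.adjoin.powerBasis alpha_int).lift (-g)
    (by
      rw [IntermediateField.adjoin.powerBasis_gen, IntermediateField.minpoly_gen, alpha_min]
      simp only [map_add, map_pow, aeval_X, aeval_C, map_ofNat]
      rw [neg_pow, gen_sq]
      ring)

lemma sigma_gen : sigma g = -g :=
  (IntermediateField.adjoin.powerBasis alpha_int).lift_gen (-g) _

noncomputable def tau : RingOfIntegers K →+* RingOfIntegers K :=
  NumberField.RingOfIntegers.mapRingHom sigma

lemma tau_coe (x : RingOfIntegers K) : ((tau x : RingOfIntegers K) : K) = sigma (x : K) := rfl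

set_option maxHeartbeats 2000000 in
set_option synthInstance.maxHeartbeats 400000 in
/-- For `K = ℚ(√-7)` with `ω = (1 + √-7)/2`, if `𝔭 = (2, ω)` is a prime ideal above `2`
and `Δ = 𝔭^3`, then the unit group of `O_K / Δ` is isomorphic to `(ℤ/8ℤ)ˣ`. -/
theorem units_quotient_iso_zmod_eight_units
    (ω : RingOfIntegers ℚ⟮(Complex.I * Real.sqrt 7 : ℂ)⟯)
    (hω : ((ω : ℚ⟮(Complex.I * Real.sqrt 7 : ℂ)⟯) : ℂ) = (1 + Complex.I * Real.sqrt 7) / 2)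
    (P : Ideal (RingOfIntegers ℚ⟮(Complex.I * Real.sqrt 7 : ℂ)⟯))
    (hP : P = Ideal.span {(2 : RingOfIntegers ℚ⟮(Complex.I * Real.sqrt 7 : ℂ)⟯), ω})
    (hPprime : P.IsPrime) :
    Nonempty ((RingOfIntegers ℚ⟮(Complex.I * Real.sqrt 7 : ℂ)⟯ ⧸ P ^ 3)ˣ ≃* (ZMod 8)ˣ) := by
  -- basic memberships
  have hωP : ω ∈ P := hP ▸ Ideal.subset_span (by simp)
  have h2P : (2 : RingOfIntegers K) ∈ P := hP ▸ Ideal.subset_span (by simp)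
  -- ω * ω = ω - 2
  have h2 : ω * ω = ω - 2 := by
    apply NumberField.RingOfIntegers.ext
    push_cast
    apply Subtype.coe_injective
    push_cast
    rw [hω]
    have h2c : (((2 : NumberField.RingOfIntegers K) : K) : ℂ) = 2 := by
      rw [NumberField.RingOfIntegers.coe_eq_algebraMap, map_ofNat]; norm_cast
    have h7 := sqrt7_sq
    have hI := Complex.I_sq
    linear_combination (((Real.sqrt 7 : ℝ) : ℂ) ^ 2 / 4) * hI - (1 / 4 : ℂ) * h7 + h2c
  -- proper ideal facts
  have hPtop := hPprime.ne_top
  have h1P : (1 : NumberField.RingOfIntegers K) ∉ P := fun h => hPtop ((Ideal.eq_top_iff_one _).2 h)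
  have h1ωP : (1 - ω) ∉ P := fun h => h1P (by simpa using Ideal.add_mem P h hωP)
  -- omega as element of K
  have hωK : 2 * (ω : K) = 1 + g := by
    apply Subtype.coe_injective
    push_cast
    rw [hω, coe_gen, show ((2:K):ℂ) = 2 from rfl]
    ring
  have tau_omega : tau ω = 1 - ω := by
    apply NumberField.RingOfIntegers.ext
    apply mul_left_cancel₀ (two_ne_zero : (2 : K) ≠ 0)
    have hσ := congrArg sigma hωK
    rw [map_mul, map_ofNat, map_add, map_one, sigma_gen] at hσ
    rw [tau_coe, hσ]
    push_cast
    linear_combination hωK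
  -- the conjugate ideal
  set Pb : Ideal (NumberField.RingOfIntegers K) := Ideal.span {2, 1 - ω} with hPb
  have h2Pb : (2 : NumberField.RingOfIntegers K) ∈ Pb := Ideal.subset_span (by simp)
  have h1ωPb : (1 - ω) ∈ Pb := Ideal.subset_span (by simp)
  -- P * Pb = (2)
  have hmulP : P * Pb = Ideal.span {(2 : NumberField.RingOfIntegers K)} := by
    apply le_antisymm
    · rw [Ideal.mul_le]
      intro r hr s hs
      rw [hP, Ideal.mem_span_pair] at hr
      rw [hPb, Ideal.mem_span_pair] at hs
      obtain ⟨a, b, rfl⟩ := hr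
      obtain ⟨c, d, rfl⟩ := hs
      rw [Ideal.mem_span_singleton]
      exact ⟨2*a*c + a*d*(1-ω) + b*c*ω + b*d, by linear_combination (-(b*d)) * h2⟩
    · rw [Ideal.span_le, Set.singleton_subset_iff]
      have : (2 : NumberField.RingOfIntegers K) = ω * 2 + 2 * (1 - ω) := by ring
      rw [this]
      exact Ideal.add_mem _ (Ideal.mul_mem_mul hωP h2Pb) (Ideal.mul_mem_mul h2P h1ωPb)
  -- absNorm of (2)
  have habs2 : Ideal.absNorm (Ideal.span {(2 : NumberField.RingOfIntegers K)}) = 4 := by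
    rw [Ideal.absNorm_span_singleton]
    have h2alg : (2 : NumberField.RingOfIntegers K) = algebraMap ℤ _ 2 := by norm_num
    have hb := Module.Free.chooseBasis ℤ (NumberField.RingOfIntegers K)
    have hcard : Fintype.card (Module.Free.ChooseBasisIndex ℤ (NumberField.RingOfIntegers K)) = 2 := by
      rw [← Module.finrank_eq_card_chooseBasisIndex, NumberField.RingOfIntegers.rank, finrank_K]
    rw [h2alg, Algebra.norm_algebraMap_of_basis hb, hcard]
    norm_num
  -- absNorm P = 2
  have habsP : Ideal.absNorm P = 2 := by
    have hm : Ideal.absNorm P * Ideal.absNorm Pb = 4 := by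
      rw [← map_mul, hmulP, habs2]
    have hdvd : Ideal.absNorm P ∣ 4 := ⟨Ideal.absNorm Pb, hm.symm⟩
    have h4eq : (4 : ℕ) = 2 ^ 2 := by norm_num
    rw [h4eq] at hdvd
    rcases (Nat.dvd_prime_pow Nat.prime_two).1 hdvd with ⟨i, hi, hPi⟩
    interval_cases i
    · exfalso
      rw [pow_zero] at hPi
      exact hPtop (Ideal.absNorm_eq_one_iff.1 hPi)
    · rw [hPi]; norm_num
    · exfalso
      rw [hPi] at hm
      have hPb1 : Ideal.absNorm Pb = 1 := by omega
      have hPbtop : Pb = ⊤ := Ideal.absNorm_eq_one_iff.1 hPb1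
      have h1Pb : (1 : NumberField.RingOfIntegers K) ∈ Pb := hPbtop ▸ Submodule.mem_top
      rw [hPb, Ideal.mem_span_pair] at h1Pb
      obtain ⟨a, b, hab⟩ := h1Pb
      apply h1P
      rw [hP, Ideal.mem_span_pair]
      refine ⟨tau a, tau b, ?_⟩
      have := congrArg tau hab
      rw [map_add, map_mul, map_mul, map_ofNat, map_one, map_sub, map_one, tau_omega] at this
      calc tau a * 2 + tau b * ω = tau a * 2 + tau b * (1 - (1 - ω)) := by ring
      _ = 1 := by rw [← this]; ring
  -- P is a nonzero prime
  have hP0 : P ≠ ⊥ := by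
    intro hb
    rw [hb, Ideal.mem_bot] at h2P
    exact two_ne_zero h2P
  have hPr : Prime P := Ideal.prime_of_isPrime hP0 hPprime
  have h8 : (8 : NumberField.RingOfIntegers K) ∈ P ^ 3 := by
    have : (8 : NumberField.RingOfIntegers K) = 2 ^ 3 := by norm_num
    rw [this]
    exact Ideal.pow_mem_pow h2P 3
  -- 4 ∉ P^3
  have h4 : (4 : NumberField.RingOfIntegers K) ∉ P ^ 3 := by
    intro h44
    have hd : P ^ 3 ∣ Ideal.span {(4 : NumberField.RingOfIntegers K)} :=
      Ideal.dvd_iff_le.2 ((Ideal.span_singleton_le_iff_mem _).2 h44)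
    have h4eq : Ideal.span {(4 : NumberField.RingOfIntegers K)} = P ^ 2 * Pb ^ 2 := by
      have h4s : Ideal.span {(4 : NumberField.RingOfIntegers K)}
          = Ideal.span {(2 : NumberField.RingOfIntegers K)} * Ideal.span {(2 : NumberField.RingOfIntegers K)} := by
        rw [Ideal.span_singleton_mul_span_singleton]; norm_num
      rw [h4s, ← hmulP]; ring
    rw [h4eq] at hd
    have h3eq : P ^ 3 = P ^ 2 * P := by ring
    rw [h3eq] at hd
    have hP2 : (P : Ideal (NumberField.RingOfIntegers K)) ^ 2 ≠ 0 := pow_ne_zero 2 hP0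
    have hdvd2 : P ∣ Pb ^ 2 := (mul_dvd_mul_iff_left hP2).1 hd
    rw [sq] at hdvd2
    have : P ∣ Pb := (hPr.2.2 _ _ hdvd2).elim id id
    exact h1ωP (Ideal.le_of_dvd this h1ωPb)
  -- core divisibility lemma
  have hP3P : P ^ 3 ≤ P := Ideal.pow_le_self (by norm_num)
  have hcore : ∀ n : ℤ, ((n : ℤ) : NumberField.RingOfIntegers K) ∈ P ^ 3 → (8 : ℤ) ∣ n := by
    intro n hn
    have hr : (((n % 8 : ℤ)) : NumberField.RingOfIntegers K) ∈ P ^ 3 := by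
      have heq : (((n % 8 : ℤ)) : NumberField.RingOfIntegers K)
          = ((n : ℤ) : NumberField.RingOfIntegers K) - 8 * ((n / 8 : ℤ) : NumberField.RingOfIntegers K) := by
        push_cast [Int.emod_def]
        ring
      rw [heq]
      exact Ideal.sub_mem _ hn (Ideal.mul_mem_right _ _ h8)
    have h0 : 0 ≤ n % 8 := Int.emod_nonneg n (by norm_num)
    have hlt : n % 8 < 8 := Int.emod_lt_of_pos n (by norm_num)
    obtain ⟨r, hr'⟩ : ∃ r, n % 8 = r := ⟨_, rfl⟩
    rw [hr'] at hr h0 hlt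
    have hmod : n % 8 = 0 := by
      interval_cases r
      · exact hr'
      · exfalso; apply h1P
        have h1m := hP3P hr
        norm_num at h1m
        exact h1m
      · exfalso; apply h4
        have : (4 : NumberField.RingOfIntegers K) = ((2 : ℤ) : NumberField.RingOfIntegers K) + ((2 : ℤ) : NumberField.RingOfIntegers K) := by norm_num
        rw [this]; exact Ideal.add_mem _ hr hr
      · exfalso; apply h1P
        have h3 : ((3 : ℤ) : NumberField.RingOfIntegers K) ∈ P := hP3P hr
        have := Ideal.sub_mem P h3 h2P
        norm_num at this
        exact this
      · exfalso; apply h4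
        have : (4 : NumberField.RingOfIntegers K) = ((4 : ℤ) : NumberField.RingOfIntegers K) := by norm_num
        rw [this]; exact hr
      · exfalso; apply h1P
        have h5 : ((5 : ℤ) : NumberField.RingOfIntegers K) ∈ P := hP3P hr
        have h4' : (2 : NumberField.RingOfIntegers K) * 2 ∈ P := Ideal.mul_mem_right _ _ h2P
        have := Ideal.sub_mem P h5 h4'
        norm_num at this
        exact this
      · exfalso; apply h4
        have h36 : ((6 : ℤ) : NumberField.RingOfIntegers K) * ((6 : ℤ) : NumberField.RingOfIntegers K) ∈ P ^ 3 :=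
          Ideal.mul_mem_right _ _ hr
        have h32 : (8 : NumberField.RingOfIntegers K) * 4 ∈ P ^ 3 := Ideal.mul_mem_right _ _ h8
        have := Ideal.sub_mem _ h36 h32
        norm_num at this
        exact this
      · exfalso; apply h1P
        have h7 : ((7 : ℤ) : NumberField.RingOfIntegers K) ∈ P := hP3P hr
        have h6 : (2 : NumberField.RingOfIntegers K) * 3 ∈ P := Ideal.mul_mem_right _ _ h2P
        have := Ideal.sub_mem P h7 h6
        norm_num at this
        exact this
    omega
  -- cardinality of the quotient
  have hcard : Nat.card (NumberField.RingOfIntegers K ⧸ P ^ 3) = 8 := by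
    rw [← Submodule.cardQuot_apply, ← Ideal.absNorm_apply, map_pow, habsP]
    norm_num
  -- the ring hom from ℤ
  set f : ℤ →+* NumberField.RingOfIntegers K ⧸ P ^ 3 :=
    (Ideal.Quotient.mk (P ^ 3)).comp (Int.castRingHom _) with hf
  have hker : ∀ a ∈ Ideal.span {(8 : ℤ)}, f a = 0 := by
    intro a ha
    rw [Ideal.mem_span_singleton] at ha
    obtain ⟨c, rfl⟩ := ha
    rw [hf, RingHom.comp_apply]
    rw [Ideal.Quotient.eq_zero_iff_mem, map_mul, map_ofNat]
    exact Ideal.mul_mem_right _ _ h8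
  set fbar := Ideal.Quotient.lift (Ideal.span {(8 : ℤ)}) f hker with hfbar
  have hinj : Function.Injective fbar := by
    rw [injective_iff_map_eq_zero]
    intro x hx
    obtain ⟨n, rfl⟩ := Ideal.Quotient.mk_surjective x
    rw [hfbar, Ideal.Quotient.lift_mk] at hx
    have hmem : ((n : ℤ) : NumberField.RingOfIntegers K) ∈ P ^ 3 := by
      rw [hf, RingHom.comp_apply] at hx
      exact (Ideal.Quotient.eq_zero_iff_mem).1 hx
    have := hcore n hmem
    rw [Ideal.Quotient.eq_zero_iff_mem, Ideal.mem_span_singleton]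
    exact this
  have hspan_eq : (Ideal.span {((8 : ℕ) : ℤ)}) = Ideal.span {(8 : ℤ)} := by norm_num
  have hcardZ : Nat.card (ℤ ⧸ Ideal.span {(8 : ℤ)}) = 8 := by
    rw [← hspan_eq, Nat.card_congr (Int.quotientSpanNatEquivZMod 8).toEquiv, Nat.card_zmod]
  have hfin : Finite (NumberField.RingOfIntegers K ⧸ P ^ 3) :=
    Nat.finite_of_card_ne_zero (by rw [hcard]; norm_num)
  have hbij : Function.Bijective fbar := by
    rw [Nat.bijective_iff_injective_and_card]
    refine ⟨hinj, ?_⟩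
    rw [hcard, hcardZ]
  have e2 : (ℤ ⧸ Ideal.span {(8 : ℤ)}) ≃+* NumberField.RingOfIntegers K ⧸ P ^ 3 :=
    RingEquiv.ofBijective fbar hbij
  have eInt : (ℤ ⧸ Ideal.span {(8 : ℤ)}) ≃+* ZMod 8 :=
    (Ideal.quotEquivOfEq hspan_eq.symm).trans (Int.quotientSpanNatEquivZMod 8)
  have e : ZMod 8 ≃+* NumberField.RingOfIntegers K ⧸ P ^ 3 := eInt.symm.trans e2
  exact ⟨(Units.mapEquiv e.toMulEquiv).symm⟩
end
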